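/- arXiv:1411.6532 — 5 statements merged into one kernel-verified Lean document; each statement's English description precedes it below -/
import Mathlib

section
/- Let G be a simple connected graph on vertex set V = {1,...,n}, let ℓ be a Laplacian eigenvalue of G admitting a nonzero eigenvector X = (x_1,...,x_n)^T whose entries sum to zero, and let λ and μ be real numbers such that every pair of adjacent vertices of G has at least λ common neighbors and every pair of distinct nonadjacent vertices of G has at least μ common neighbors. Then Σ_{i=1}^n [ (d_i − ℓ)² − Σ_{j ∈ G_1(i)} d_j + λℓ + μ(n − ℓ) ] x_i² ≤ 0. -/
/-!
Write `Q_M(x) = ½ ∑ᵢⱼ M i j (xᵢ - xⱼ)²` for the Laplacian quadratic form of a weight matrix `M`;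
for symmetric `M` one has `xᵀ M x = ∑ᵢ rᵢ xᵢ² - Q_M(x)` with `rᵢ` the row sums of `M`.
With `A` the adjacency matrix, the eigen-equation reads `A X = (D - ℓ) X`, so
`∑ (dᵢ - ℓ)² xᵢ² = Xᵀ A² X`, and the row sums of `A²` are `dᵢ mᵢ`.
Off the diagonal `A²` counts common neighbours, so it dominates `λ A + μ A(Gᶜ)` there, and `Q`
is monotone in the off-diagonal entries. Hence
`Q_{A²}(X) ≥ λ Q_A(X) + μ Q_{A(Gᶜ)}(X) = λ ℓ ‖X‖² + μ (n - ℓ) ‖X‖²`,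
because `Q_A(X) = Xᵀ L X` and `Q_A + Q_{A(Gᶜ)} = n ‖X‖² - (∑ xᵢ)²`, which is `n ‖X‖²` here.
-/

open Finset Matrix

namespace Matrix

variable {ι R : Type*} [Fintype ι] [Field R]

def laplacianForm (M : Matrix ι ι R) (x : ι → R) : R :=
  (∑ i, ∑ j, M i j * (x i - x j) ^ 2) / 2

theorem laplacianForm_add (M N : Matrix ι ι R) (x : ι → R) :
    laplacianForm (M + N) x = laplacianForm M x + laplacianForm N x := by
  simp only [laplacianForm, add_apply, add_mul, sum_add_distrib, add_div]

theorem laplacianForm_smul (c : R) (M : Matrix ι ι R) (x : ι → R) :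
    laplacianForm (c • M) x = c * laplacianForm M x := by
  simp only [laplacianForm, smul_apply, smul_eq_mul, mul_assoc, ← mul_sum, mul_div_assoc]

theorem laplacianForm_mono [LinearOrder R] [IsStrictOrderedRing R] {M N : Matrix ι ι R}
    (h : ∀ i j, i ≠ j → M i j ≤ N i j) (x : ι → R) :
    laplacianForm M x ≤ laplacianForm N x := by
  refine div_le_div_of_nonneg_right (sum_le_sum fun i _ => sum_le_sum fun j _ => ?_) zero_le_two
  obtain rfl | hij := eq_or_ne i j
  · simp
  · exact mul_le_mul_of_nonneg_right (h i j hij) (sq_nonneg _)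

theorem IsSymm.dotProduct_mulVec_eq_sub_laplacianForm [CharZero R] {M : Matrix ι ι R}
    (hM : M.IsSymm) (x : ι → R) :
    x ⬝ᵥ M *ᵥ x = ∑ i, (∑ j, M i j) * x i ^ 2 - laplacianForm M x := by
  have hswap : ∑ i, ∑ j, M i j * x j ^ 2 = ∑ i, ∑ j, M i j * x i ^ 2 := by
    rw [sum_comm]; simp_rw [hM.apply]
  have hexp : ∑ i, ∑ j, M i j * (x i - x j) ^ 2
      = ∑ i, ∑ j, M i j * x i ^ 2 - 2 * (x ⬝ᵥ M *ᵥ x) + ∑ i, ∑ j, M i j * x j ^ 2 := by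
    simp only [dotProduct, mulVec, mul_sum, ← sum_sub_distrib, ← sum_add_distrib]
    exact sum_congr rfl fun i _ => sum_congr rfl fun j _ => by ring
  rw [laplacianForm, hexp, hswap]
  simp only [sum_mul]
  ring

theorem IsSymm.mulVec_dotProduct_mulVec {M : Matrix ι ι R} (hM : M.IsSymm) (x : ι → R) :
    (M *ᵥ x) ⬝ᵥ (M *ᵥ x) = x ⬝ᵥ (M * M) *ᵥ x := by
  rw [← mulVec_mulVec, dotProduct_mulVec x M, ← mulVec_transpose, hM.eq]

end Matrix

namespace SimpleGraph

variable {V R : Type*} [Fintype V] (G : SimpleGraph V) [DecidableRel G.Adj]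

theorem laplacianForm_adjMatrix [DecidableEq V] [Field R] [CharZero R] (x : V → R) :
    (G.adjMatrix R).laplacianForm x = x ⬝ᵥ G.lapMatrix R *ᵥ x := by
  rw [← toLinearMap₂'_apply', lapMatrix_toLinearMap₂', laplacianForm]
  simp only [adjMatrix_apply, ite_mul, one_mul, zero_mul]

theorem laplacianForm_adjMatrix_add_compl [DecidableEq V] [Field R] [CharZero R] (x : V → R) :
    (G.adjMatrix R).laplacianForm x + (Gᶜ.adjMatrix R).laplacianForm x
      = Fintype.card V * ∑ i, x i ^ 2 - (∑ i, x i) ^ 2 := by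
  rw [← laplacianForm_add,
    IsCompl.adjMatrix_add_adjMatrix_eq_adjMatrix_completeGraph R isCompl_compl, laplacianForm]
  have hdiag (i j : V) : (if i = j then 0 else (x i - x j) ^ 2) = (x i - x j) ^ 2 := by
    split_ifs with h <;> simp [h]
  simp only [completeGraph_eq_top, adjMatrix_top, of_apply, ite_mul, zero_mul, one_mul, hdiag]
  simp only [sub_sq, sum_add_distrib, sum_sub_distrib, ← mul_sum, ← sum_mul, sum_const, card_univ,
    nsmul_eq_mul]
  ring

theorem adjMatrix_mul_self_apply [DecidableEq V] [Semiring R] (i j : V) :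
    (G.adjMatrix R * G.adjMatrix R) i j = #(G.neighborFinset i ∩ G.neighborFinset j) := by
  rw [adjMatrix_mul_apply]
  simp only [adjMatrix_apply, sum_boole]
  congr 2
  ext k
  simp [adj_comm]

theorem sum_adjMatrix_mul_self_apply [Semiring R] (i : V) :
    ∑ j, (G.adjMatrix R * G.adjMatrix R) i j = ∑ j ∈ G.neighborFinset i, (G.degree j : R) := by
  simp only [adjMatrix_mul_apply, adjMatrix_apply]
  rw [sum_comm]
  refine sum_congr rfl fun u _ => ?_
  simp [← card_neighborFinset_eq_degree, neighborFinset_eq_filter]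

variable {G} in
theorem adjMatrix_mulVec_apply_of_lapMatrix_mulVec_eq_smul [DecidableEq V] [CommRing R]
    {ℓ : R} {x : V → R} (h : G.lapMatrix R *ᵥ x = ℓ • x) (i : V) :
    (G.adjMatrix R *ᵥ x) i = (G.degree i - ℓ) * x i := by
  have := congrFun h i
  rw [lapMatrix_mulVec_apply, Pi.smul_apply, smul_eq_mul] at this
  rw [adjMatrix_mulVec_apply]
  linear_combination -this

variable {G} in
theorem sum_sq_mul_sq_of_lapMatrix_mulVec_eq_smul [DecidableEq V] [Field R] [CharZero R]
    {ℓ : R} {x : V → R} (h : G.lapMatrix R *ᵥ x = ℓ • x) :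
    ∑ i, ((G.degree i : R) - ℓ) ^ 2 * x i ^ 2
      = ∑ i, (∑ j ∈ G.neighborFinset i, (G.degree j : R)) * x i ^ 2
        - (G.adjMatrix R * G.adjMatrix R).laplacianForm x := by
  have hsymm : (G.adjMatrix R * G.adjMatrix R).IsSymm := by
    simpa only [transpose_adjMatrix] using isSymm_mul_transpose_self (G.adjMatrix R)
  simp only [← sum_adjMatrix_mul_self_apply]
  rw [← hsymm.dotProduct_mulVec_eq_sub_laplacianForm,
    ← G.isSymm_adjMatrix.mulVec_dotProduct_mulVec]
  simp only [dotProduct, adjMatrix_mulVec_apply_of_lapMatrix_mulVec_eq_smul h]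
  exact sum_congr rfl fun i _ => by ring

theorem laplacianForm_adjMatrix_mul_self_ge [DecidableEq V] [Field R] [LinearOrder R]
    [IsStrictOrderedRing R] {lam mu : R}
    (hlam : ∀ i j, G.Adj i j → lam ≤ #(G.neighborFinset i ∩ G.neighborFinset j))
    (hmu : ∀ i j, i ≠ j → ¬ G.Adj i j → mu ≤ #(G.neighborFinset i ∩ G.neighborFinset j))
    (x : V → R) :
    lam * (G.adjMatrix R).laplacianForm x + mu * (Gᶜ.adjMatrix R).laplacianForm x
      ≤ (G.adjMatrix R * G.adjMatrix R).laplacianForm x := by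
  rw [← laplacianForm_smul, ← laplacianForm_smul, ← laplacianForm_add]
  refine laplacianForm_mono (fun i j hij => ?_) x
  rw [adjMatrix_mul_self_apply]
  by_cases hadj : G.Adj i j
  · simpa [hadj] using hlam i j hadj
  · simpa [hadj, hij] using hmu i j hij hadj

end SimpleGraph

open SimpleGraph

theorem main_inequality_general (n : ℕ) (G : SimpleGraph (Fin n)) [DecidableRel G.Adj]
    (ℓ : ℝ) (X : Fin n → ℝ) (hsum : ∑ i, X i = 0)
    (heig : (G.lapMatrix ℝ).mulVec X = ℓ • X)
    (lam mu : ℝ)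
    (hlam : ∀ i j : Fin n, G.Adj i j →
      lam ≤ ((G.neighborFinset i ∩ G.neighborFinset j).card : ℝ))
    (hmu : ∀ i j : Fin n, i ≠ j → ¬ G.Adj i j →
      mu ≤ ((G.neighborFinset i ∩ G.neighborFinset j).card : ℝ)) :
    ∑ i, (((G.degree i : ℝ) - ℓ) ^ 2 - (∑ j ∈ G.neighborFinset i, (G.degree j : ℝ))
        + lam * ℓ + mu * ((n : ℝ) - ℓ)) * X i ^ 2 ≤ 0 := by
  set K := ∑ i, X i ^ 2
  have hform : (G.adjMatrix ℝ).laplacianForm X = ℓ * K := by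
    rw [laplacianForm_adjMatrix, heig, dotProduct_smul, smul_eq_mul]
    simp [dotProduct, K, sq]
  have hform_compl : (Gᶜ.adjMatrix ℝ).laplacianForm X = n * K - ℓ * K := by
    have := G.laplacianForm_adjMatrix_add_compl X
    rw [hform, hsum, Fintype.card_fin] at this
    linear_combination this
  have hlower := G.laplacianForm_adjMatrix_mul_self_ge hlam hmu X
  rw [hform, hform_compl] at hlower
  calc _ = ∑ i, ((G.degree i : ℝ) - ℓ) ^ 2 * X i ^ 2
        - ∑ i, (∑ j ∈ G.neighborFinset i, (G.degree j : ℝ)) * X i ^ 2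
        + (lam * ℓ + mu * ((n : ℝ) - ℓ)) * K := by
        simp only [add_mul, sub_mul, sum_add_distrib, sum_sub_distrib, mul_sum, K]
        ring
    _ ≤ 0 := by
        rw [sum_sq_mul_sq_of_lapMatrix_mulVec_eq_smul heig]
        linarith

/-- **Theorem (main inequality).** For a simple connected graph `G` on `{1,...,n}`,
a nontrivial Laplacian eigenvalue `ℓ` with nonzero eigenvector `X` summing to zero,
and reals `λ ≤ λ(G)`, `μ ≤ μ(G)`:
`∑ i [(d_i − ℓ)² − ∑_{j∈N(i)} d_j + λℓ + μ(n − ℓ)] x_i² ≤ 0`. -/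
theorem main_inequality (n : ℕ) (G : SimpleGraph (Fin n)) [DecidableRel G.Adj]
    (hconn : G.Connected)
    (ℓ : ℝ) (X : Fin n → ℝ) (hX : X ≠ 0) (hsum : ∑ i, X i = 0)
    (heig : (G.lapMatrix ℝ).mulVec X = ℓ • X)
    (lam mu : ℝ)
    (hlam : ∀ i j : Fin n, G.Adj i j →
      lam ≤ ((G.neighborFinset i ∩ G.neighborFinset j).card : ℝ))
    (hmu : ∀ i j : Fin n, i ≠ j → ¬ G.Adj i j →
      mu ≤ ((G.neighborFinset i ∩ G.neighborFinset j).card : ℝ)) :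
    ∑ i, (((G.degree i : ℝ) - ℓ) ^ 2 - (∑ j ∈ G.neighborFinset i, (G.degree j : ℝ))
        + lam * ℓ + mu * ((n : ℝ) - ℓ)) * X i ^ 2 ≤ 0 :=
  main_inequality_general n G ℓ X hsum heig lam mu hlam hmu
end

section
/- Let G be a simple connected graph on vertex set V = {1,...,n}, let ℓ be a Laplacian eigenvalue of G admitting a nonzero eigenvector X = (x_1,...,x_n)^T whose entries sum to zero, set λ(G) = min over adjacent pairs of vertices of the number of their common neighbors and μ(G) = min over distinct nonadjacent pairs of vertices of the number of their common neighbors (G not complete). Then equality Σ_{i=1}^n [ (d_i − ℓ)² − Σ_{j ∈ G_1(i)} d_j + λ(G)ℓ + μ(G)(n − ℓ) ] x_i² = 0 holds if and only if for all distinct vertices i, j: (a) if ij is an edge and x_i ≠ x_j then i and j have exactly λ(G) common neighbors, and (b) if ij is not an edge and x_i ≠ x_j then i and j have exactly μ(G) common neighbors. -/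
/-!
Write `c j k` for the number of common neighbours of `j` and `k`, and `w j k` for `λ(G)` if
`j ∼ k` and `μ(G)` otherwise. With `A` the adjacency matrix, the eigenvector equation gives
`∑ (d_i - ℓ)² x_i² = ‖A x‖² = xᵀ A² x`, while `∑_{j ∼ i} d_j = (A² 𝟙)_i`; as `A² = (c j k)`,
these two terms combine to `-½ ∑_{j,k} c j k (x_j - x_k)²`. On the other hand
`∑_{j ∼ k} (x_j - x_k)² = 2ℓ‖x‖²` and, since `∑ x_i = 0`, `∑_{j,k} (x_j - x_k)² = 2n‖x‖²`, so
`(λ(G)ℓ + μ(G)(n - ℓ))‖x‖² = ½ ∑_{j,k} w j k (x_j - x_k)²`. Altogether the sum in question is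
`-½ ∑_{j,k} (c j k - w j k)(x_j - x_k)²`, and every term is nonnegative by the minimality of
`λ(G)` and `μ(G)`; so it vanishes iff `c j k = w j k` whenever `x_j ≠ x_k`.
-/

open Finset Matrix

section
variable {V R : Type*} [Fintype V] [CommRing R]

theorem sum_sum_mul_sub_sq_of_symm (c : V → V → R) (hc : ∀ j k, c j k = c k j) (x : V → R) :
    ∑ j, ∑ k, c j k * (x j - x k) ^ 2 = 2 * ∑ j, ∑ k, c j k * (x j ^ 2 - x j * x k) := by
  have hswap : ∑ j, ∑ k, c j k * x k ^ 2 = ∑ j, ∑ k, c j k * x j ^ 2 := by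
    rw [sum_comm]; simp_rw [hc]
  have hsplit : ∀ j k, c j k * (x j - x k) ^ 2
      = 2 * (c j k * (x j ^ 2 - x j * x k)) + (c j k * x k ^ 2 - c j k * x j ^ 2) := by
    intro j k; ring
  simp_rw [hsplit, sum_add_distrib, sum_sub_distrib, ← mul_sum, hswap, sub_self, add_zero]

theorem sum_sum_sub_sq (x : V → R) :
    ∑ j, ∑ k, (x j - x k) ^ 2 = 2 * (Fintype.card V * ∑ i, x i ^ 2 - (∑ i, x i) ^ 2) := by
  have h := sum_sum_mul_sub_sq_of_symm (fun _ _ => (1 : R)) (fun _ _ => rfl) x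
  simp only [one_mul, mul_sub, sum_sub_distrib, sum_const, card_univ, nsmul_eq_mul, ← mul_sum] at h
  rw [h, sq (∑ i, x i), sum_mul]
  ring

theorem sum_sum_mul_sub_sq_eq_zero_iff [LinearOrder R] [IsStrictOrderedRing R]
    {f : V → V → R} {x : V → R} (hf : ∀ j k, j ≠ k → 0 ≤ f j k) :
    ∑ j, ∑ k, f j k * (x j - x k) ^ 2 = 0 ↔ ∀ j k, j ≠ k → x j ≠ x k → f j k = 0 := by
  have hterm : ∀ j k, 0 ≤ f j k * (x j - x k) ^ 2 := by
    intro j k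
    rcases eq_or_ne j k with rfl | hjk
    · simp
    · exact mul_nonneg (hf j k hjk) (sq_nonneg _)
  simp only [sum_eq_zero_iff_of_nonneg (fun j _ => sum_nonneg fun k _ => hterm j k),
    sum_eq_zero_iff_of_nonneg (fun k _ => hterm _ k), mem_univ, true_imp_iff, mul_eq_zero,
    pow_eq_zero_iff two_ne_zero, sub_eq_zero]
  refine forall₂_congr fun j k => ?_
  rcases eq_or_ne j k with rfl | hjk <;> tauto
end

namespace SimpleGraph
variable {V : Type*} [Fintype V] [DecidableEq V] (G : SimpleGraph V) [DecidableRel G.Adj]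

theorem sum_sum_ite_adj_sub_sq_of_lapMatrix_mulVec_eq {R : Type*} [Field R] [CharZero R]
    {x : V → R} {ℓ : R} (heig : G.lapMatrix R *ᵥ x = ℓ • x) :
    ∑ j, ∑ k, (if G.Adj j k then (x j - x k) ^ 2 else 0) = 2 * ℓ * ∑ i, x i ^ 2 := by
  have h := G.lapMatrix_toLinearMap₂' R x
  rw [toLinearMap₂'_apply', heig, dotProduct_smul, smul_eq_mul] at h
  rw [eq_div_iff two_ne_zero] at h
  rw [← h, dotProduct]
  simp_rw [sq]
  ring

theorem adjMatrix_mul_self_apply_s1 {α : Type*} [NonAssocSemiring α] (v w : V) :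
    (G.adjMatrix α * G.adjMatrix α) v w = #(G.neighborFinset v ∩ G.neighborFinset w) := by
  rw [adjMatrix_mul_apply, ← filter_mem_eq_inter]
  simp [adjMatrix_apply, sum_boole, adj_comm]

theorem sum_sq_sum_neighborFinset {R : Type*} [CommSemiring R] (x : V → R) :
    ∑ i, (∑ j ∈ G.neighborFinset i, x j) ^ 2
      = ∑ j, ∑ k, #(G.neighborFinset j ∩ G.neighborFinset k) * (x j * x k) := by
  set A := G.adjMatrix R
  calc ∑ i, (∑ j ∈ G.neighborFinset i, x j) ^ 2 = (A *ᵥ x) ⬝ᵥ (A *ᵥ x) := by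
        simp [A, dotProduct, sq]
    _ = ((A * A) *ᵥ x) ⬝ᵥ x := by
        rw [dotProduct_mulVec, ← mulVec_transpose, transpose_adjMatrix, mulVec_mulVec]
    _ = _ := by
        simp only [dotProduct, mulVec, adjMatrix_mul_self_apply_s1, A, sum_mul]
        exact sum_congr rfl fun j _ => sum_congr rfl fun k _ => by ring

theorem sum_neighborFinset_degree {R : Type*} [Semiring R] (i : V) :
    ∑ j ∈ G.neighborFinset i, (G.degree j : R)
      = ∑ k, (#(G.neighborFinset i ∩ G.neighborFinset k) : R) := by
  calc ∑ j ∈ G.neighborFinset i, (G.degree j : R)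
      = (G.adjMatrix R *ᵥ (G.adjMatrix R *ᵥ 1)) i := by simp
    _ = _ := by
        rw [mulVec_mulVec]
        simp only [mulVec, dotProduct, adjMatrix_mul_self_apply_s1, Pi.one_apply, mul_one]

def commonNeighborsExcess (a b : ℝ) (j k : V) : ℝ :=
  #(G.neighborFinset j ∩ G.neighborFinset k) - if G.Adj j k then a else b

theorem sum_mul_sq_eq_neg_half_sum_commonNeighborsExcess {x : V → ℝ} {ℓ : ℝ}
    (heig : G.lapMatrix ℝ *ᵥ x = ℓ • x) (hsum : ∑ i, x i = 0) (a b : ℝ) :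
    ∑ i, (((G.degree i : ℝ) - ℓ) ^ 2 - ∑ j ∈ G.neighborFinset i, (G.degree j : ℝ)
        + a * ℓ + b * (Fintype.card V - ℓ)) * x i ^ 2
      = -(1 / 2) * ∑ j, ∑ k, G.commonNeighborsExcess a b j k * (x j - x k) ^ 2 := by
  have hdeg : ∀ i, (G.degree i - ℓ) * x i = ∑ j ∈ G.neighborFinset i, x j := fun i => by
    have := congrFun heig i
    rw [lapMatrix_mulVec_apply, Pi.smul_apply, smul_eq_mul] at this
    linear_combination this
  have hA : ∑ i, ((G.degree i : ℝ) - ℓ) ^ 2 * x i ^ 2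
      = ∑ j, ∑ k, (#(G.neighborFinset j ∩ G.neighborFinset k) : ℝ) * (x j * x k) := by
    simp_rw [← mul_pow, hdeg, sum_sq_sum_neighborFinset]
  have hD : ∑ i, (∑ j ∈ G.neighborFinset i, (G.degree j : ℝ)) * x i ^ 2
      = ∑ j, ∑ k, (#(G.neighborFinset j ∩ G.neighborFinset k) : ℝ) * x j ^ 2 := by
    simp_rw [sum_neighborFinset_degree, sum_mul]
  have hC := sum_sum_mul_sub_sq_of_symm
    (fun j k => (#(G.neighborFinset j ∩ G.neighborFinset k) : ℝ))
    (fun j k => by rw [inter_comm]) x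
  have hW : ∑ j, ∑ k, (if G.Adj j k then a else b) * (x j - x k) ^ 2
      = 2 * (a * ℓ + b * (Fintype.card V - ℓ)) * ∑ i, x i ^ 2 := by
    have hsplit : ∀ j k, (if G.Adj j k then a else b) * (x j - x k) ^ 2
        = b * (x j - x k) ^ 2 + (a - b) * if G.Adj j k then (x j - x k) ^ 2 else 0 := by
      intro j k; split_ifs <;> ring
    simp_rw [hsplit, sum_add_distrib, ← mul_sum, sum_sum_sub_sq, hsum,
      G.sum_sum_ite_adj_sub_sq_of_lapMatrix_mulVec_eq heig]
    ring
  have hexpand : ∑ i, (((G.degree i : ℝ) - ℓ) ^ 2 - ∑ j ∈ G.neighborFinset i, (G.degree j : ℝ)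
        + a * ℓ + b * (Fintype.card V - ℓ)) * x i ^ 2
      = ∑ i, ((G.degree i : ℝ) - ℓ) ^ 2 * x i ^ 2
        - ∑ i, (∑ j ∈ G.neighborFinset i, (G.degree j : ℝ)) * x i ^ 2
        + (a * ℓ + b * (Fintype.card V - ℓ)) * ∑ i, x i ^ 2 := by
    rw [mul_sum, ← sum_sub_distrib, ← sum_add_distrib]
    exact sum_congr rfl fun i _ => by ring
  simp only [commonNeighborsExcess, sub_mul, sum_sub_distrib]
  rw [hexpand, hA, hD, hC, hW]
  simp only [mul_sub, sum_sub_distrib]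
  ring

end SimpleGraph

theorem main_equality_condition_general (n : ℕ) (G : SimpleGraph (Fin n)) [DecidableRel G.Adj]
    (ℓ : ℝ) (X : Fin n → ℝ) (hsum : ∑ i, X i = 0)
    (heig : (G.lapMatrix ℝ).mulVec X = ℓ • X)
    (lamG muG : ℕ)
    (hlamG : IsLeast {m : ℕ | ∃ i j : Fin n, G.Adj i j ∧
      (G.neighborFinset i ∩ G.neighborFinset j).card = m} lamG)
    (hmuG : IsLeast {m : ℕ | ∃ i j : Fin n, i ≠ j ∧ ¬ G.Adj i j ∧
      (G.neighborFinset i ∩ G.neighborFinset j).card = m} muG) :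
    (∑ i, (((G.degree i : ℝ) - ℓ) ^ 2 - (∑ j ∈ G.neighborFinset i, (G.degree j : ℝ))
        + (lamG : ℝ) * ℓ + (muG : ℝ) * ((n : ℝ) - ℓ)) * X i ^ 2 = 0)
    ↔ (∀ i j : Fin n, i ≠ j →
        (G.Adj i j → X i ≠ X j →
          (G.neighborFinset i ∩ G.neighborFinset j).card = lamG) ∧
        (¬ G.Adj i j → X i ≠ X j →
          (G.neighborFinset i ∩ G.neighborFinset j).card = muG)) := by
  have hexcess : ∀ j k, j ≠ k → 0 ≤ G.commonNeighborsExcess lamG muG j k := by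
    intro j k hjk
    unfold SimpleGraph.commonNeighborsExcess
    split_ifs with hadj
    · exact sub_nonneg.2 (Nat.cast_le.2 (hlamG.2 ⟨j, k, hadj, rfl⟩))
    · exact sub_nonneg.2 (Nat.cast_le.2 (hmuG.2 ⟨j, k, hjk, hadj, rfl⟩))
  have key := G.sum_mul_sq_eq_neg_half_sum_commonNeighborsExcess heig hsum lamG muG
  rw [Fintype.card_fin] at key
  rw [key, mul_eq_zero, or_iff_right (by norm_num), sum_sum_mul_sub_sq_eq_zero_iff hexcess]
  refine forall₂_congr fun i j => ?_
  by_cases hadj : G.Adj i j <;> simp [SimpleGraph.commonNeighborsExcess, hadj, sub_eq_zero]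

/-- **Theorem (equality condition in the main inequality).** For a simple connected
non-complete graph `G`, a nontrivial Laplacian eigenvalue `ℓ` with nonzero eigenvector
`X` summing to zero, and `λ(G)`, `μ(G)` the minimum numbers of common neighbors over
adjacent resp. distinct nonadjacent pairs, equality
`∑ i [(d_i − ℓ)² − ∑_{j∈N(i)} d_j + λ(G)ℓ + μ(G)(n − ℓ)] x_i² = 0` holds iff
for all distinct `i j`: adjacent with `x_i ≠ x_j` implies exactly `λ(G)` common
neighbors, and nonadjacent with `x_i ≠ x_j` implies exactly `μ(G)` common neighbors. -/
theorem main_equality_condition (n : ℕ) (G : SimpleGraph (Fin n)) [DecidableRel G.Adj]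
    (hconn : G.Connected) (hnotcomplete : G ≠ ⊤)
    (ℓ : ℝ) (X : Fin n → ℝ) (hX : X ≠ 0) (hsum : ∑ i, X i = 0)
    (heig : (G.lapMatrix ℝ).mulVec X = ℓ • X)
    (lamG muG : ℕ)
    (hlamG : IsLeast {m : ℕ | ∃ i j : Fin n, G.Adj i j ∧
      (G.neighborFinset i ∩ G.neighborFinset j).card = m} lamG)
    (hmuG : IsLeast {m : ℕ | ∃ i j : Fin n, i ≠ j ∧ ¬ G.Adj i j ∧
      (G.neighborFinset i ∩ G.neighborFinset j).card = m} muG) :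
    (∑ i, (((G.degree i : ℝ) - ℓ) ^ 2 - (∑ j ∈ G.neighborFinset i, (G.degree j : ℝ))
        + (lamG : ℝ) * ℓ + (muG : ℝ) * ((n : ℝ) - ℓ)) * X i ^ 2 = 0)
    ↔ (∀ i j : Fin n, i ≠ j →
        (G.Adj i j → X i ≠ X j →
          (G.neighborFinset i ∩ G.neighborFinset j).card = lamG) ∧
        (¬ G.Adj i j → X i ≠ X j →
          (G.neighborFinset i ∩ G.neighborFinset j).card = muG)) :=
  main_equality_condition_general n G ℓ X hsum heig lamG muG hlamG hmuG
end

section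
/- Let G be a simple connected graph on n ≥ 2 vertices with minimum degree δ and maximum degree Δ, having at least one pair of distinct nonadjacent vertices, and let λ and μ be real numbers such that every pair of adjacent vertices of G has at least λ common neighbors and every pair of distinct nonadjacent vertices of G has at least μ common neighbors. Then the Laplacian spread satisfies 𝒮_L(G) ≤ Δ − δ + (1/2)[ sqrt( (2Δ − λ + μ)² − 4μn ) + sqrt( (2δ − λ + μ)² − 4μn − 4δ² + 4Δ² ) ]. -/
/-
In an orthonormal eigenbasis, `yᵀ L y ≥ ℓ_{n-1} ‖y‖²` for every `y ⊥ 1` (on a connected graph the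
kernel of `L` is spanned by `1`); testing `y = e_i - e_j` with `i` of minimum degree and `j` a
non-neighbour gives `2 ℓ_{n-1} ≤ δ + Δ`. For an eigenvector `X ⊥ 1` with eigenvalue `ℓ`, evaluate
`L² X = ℓ² X` at a vertex `u` where `X` is maximal: the rows of `L²` sum to zero, its off-diagonal
entries are `c(u,w) - [u ~ w] (d_u + d_w)` with `c` the number of common neighbours, and
`X_w - X_u ≤ 0`, so `ℓ² ≤ (2Δ - λ + μ) ℓ - μ n`. Solving this quadratic inequality for `ℓ₁` and
for `ℓ_{n-1}`, the latter sharpened by `2 ℓ_{n-1} ≤ δ + Δ`, bounds the spread.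
-/

open Finset Matrix

theorem exists_max_pos_of_sum_eq_zero {ι : Type*} [Fintype ι] {X : ι → ℝ} (hX : X ≠ 0)
    (hsum : ∑ i, X i = 0) : ∃ u, 0 < X u ∧ ∀ w, X w ≤ X u := by
  obtain ⟨i, -, hi⟩ := Finset.exists_pos_of_sum_zero_of_exists_nonzero X hsum
    (by simpa [funext_iff] using hX)
  have : Nonempty ι := ⟨i⟩
  obtain ⟨u, hu⟩ := Finite.exists_max X
  exact ⟨u, hi.trans_le (hu i), hu⟩

namespace Matrix.IsHermitian

variable {n : Type*} [Fintype n] [DecidableEq n] {A : Matrix n n ℝ}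

theorem mul_dotProduct_self_le_dotProduct_mulVec (hA : A.IsHermitian) {ℓ : ℝ} {y : n → ℝ}
    (h : ∀ μ (v : n → ℝ), A *ᵥ v = μ • v → v ⬝ᵥ y ≠ 0 → ℓ ≤ μ) :
    ℓ * (y ⬝ᵥ y) ≤ y ⬝ᵥ (A *ᵥ y) := by
  set b := hA.eigenvectorBasis
  set z : n → ℝ := fun k => ⇑(b k) ⬝ᵥ y
  have hself : y ⬝ᵥ y = ∑ k, z k * z k := by
    have := b.sum_inner_mul_inner (WithLp.toLp 2 y) (WithLp.toLp 2 y)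
    simp only [EuclideanSpace.inner_eq_star_dotProduct, star_trivial] at this
    simp only [← this, z, dotProduct_comm y]
  have hsymm : Aᵀ = A := by simpa using hA.eq
  have hquad : y ⬝ᵥ (A *ᵥ y) = ∑ k, hA.eigenvalues k * (z k * z k) := by
    have := b.sum_inner_mul_inner (WithLp.toLp 2 y) (WithLp.toLp 2 (A *ᵥ y))
    simp only [EuclideanSpace.inner_eq_star_dotProduct, star_trivial] at this
    rw [dotProduct_comm, ← this]
    refine sum_congr rfl fun k _ => ?_
    rw [dotProduct_comm _ (b k).ofLp, dotProduct_mulVec, ← mulVec_transpose, hsymm,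
      hA.mulVec_eigenvectorBasis, smul_dotProduct, smul_eq_mul]
    ring
  rw [hself, hquad, mul_sum]
  refine sum_le_sum fun k _ => ?_
  by_cases hz : z k = 0
  · simp [hz]
  · exact mul_le_mul_of_nonneg_right (h _ _ (hA.mulVec_eigenvectorBasis k) hz) (mul_self_nonneg _)

end Matrix.IsHermitian

namespace SimpleGraph

variable {V : Type*} [Fintype V] (G : SimpleGraph V) [DecidableRel G.Adj]

theorem exists_ne_not_adj_of_degree_eq_minDegree (hG : ∃ i j, i ≠ j ∧ ¬ G.Adj i j) {v : V}
    (hv : G.minDegree = G.degree v) : ∃ w, v ≠ w ∧ ¬ G.Adj v w := by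
  obtain ⟨i, j, hij, hadj⟩ := hG
  have hi : G.degree i < Fintype.card V - 1 :=
    (G.degree_lt_card_sub_one i).mpr fun h => hadj (h hij)
  have hv : ¬ G.IsUniversal v :=
    (G.degree_lt_card_sub_one v).mp (hv ▸ (G.minDegree_le_degree i).trans_lt hi)
  simpa [IsUniversal] using hv

variable [DecidableEq V]

theorem sum_eq_zero_of_lapMatrix_mulVec_eq_smul {ℓ : ℝ} {X : V → ℝ} (hℓ : ℓ ≠ 0)
    (h : G.lapMatrix ℝ *ᵥ X = ℓ • X) : ∑ i, X i = 0 := by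
  have : ℓ * ∑ i, X i = 0 :=
    calc ℓ * ∑ i, X i = (fun _ => 1) ⬝ᵥ (ℓ • X) := by simp [dotProduct, mul_sum]
      _ = (G.lapMatrix ℝ *ᵥ fun _ => 1) ⬝ᵥ X := by
        rw [← h, dotProduct_mulVec, ← mulVec_transpose, (G.isSymm_lapMatrix (R := ℝ)).eq]
      _ = 0 := by rw [lapMatrix_mulVec_const_eq_zero, zero_dotProduct]
  exact (mul_eq_zero.mp this).resolve_left hℓ

theorem nonneg_of_lapMatrix_mulVec_eq_smul {ℓ : ℝ} {X : V → ℝ} (hX : X ≠ 0)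
    (h : G.lapMatrix ℝ *ᵥ X = ℓ • X) : 0 ≤ ℓ := by
  have hpsd := (G.posSemidef_lapMatrix ℝ).dotProduct_mulVec_nonneg X
  rw [h, star_trivial, dotProduct_smul, smul_eq_mul] at hpsd
  exact nonneg_of_mul_nonneg_left hpsd (by simpa using dotProduct_self_star_pos_iff.mpr hX)

theorem lapMatrix_mul_self_apply_of_ne {R : Type*} [CommRing R] {u w : V} (huw : u ≠ w) :
    (G.lapMatrix R * G.lapMatrix R) u w =
      #(G.neighborFinset u ∩ G.neighborFinset w) -
        if G.Adj u w then (G.degree u + G.degree w : R) else 0 := by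
  have hcol : (G.lapMatrix R * G.lapMatrix R) u w =
      (G.lapMatrix R *ᵥ fun v => G.lapMatrix R v w) u := rfl
  have hcommon : ∑ v ∈ G.neighborFinset u, (if G.Adj v w then (1 : R) else 0) =
      #(G.neighborFinset u ∩ G.neighborFinset w) := by
    rw [sum_boole]
    congr 2
    ext v
    simp [G.adj_comm v w]
  have hentry : ∀ v, G.lapMatrix R v w =
      (if v = w then (G.degree v : R) else 0) - if G.Adj v w then 1 else 0 := fun v => by
    simp [lapMatrix, degMatrix, adjMatrix_apply, diagonal_apply]
  rw [hcol, lapMatrix_mulVec_apply]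
  simp only [hentry, sum_sub_distrib, hcommon, sum_ite_eq', mem_neighborFinset, huw, if_false]
  split_ifs <;> ring

theorem sq_le_of_lapMatrix_mulVec_eq_smul {lam mu : ℝ}
    (hlam : ∀ i j, G.Adj i j → lam ≤ #(G.neighborFinset i ∩ G.neighborFinset j))
    (hmu : ∀ i j, i ≠ j → ¬ G.Adj i j → mu ≤ #(G.neighborFinset i ∩ G.neighborFinset j))
    {ℓ : ℝ} {X : V → ℝ} (hX : X ≠ 0) (hsum : ∑ i, X i = 0) (h : G.lapMatrix ℝ *ᵥ X = ℓ • X) :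
    ℓ ^ 2 ≤ (2 * G.maxDegree - lam + mu) * ℓ - mu * Fintype.card V := by
  obtain ⟨u, hpos, hmax⟩ := exists_max_pos_of_sum_eq_zero hX hsum
  set L := G.lapMatrix ℝ
  have hrow : ∑ w, (L * L) u w = 0 := by
    have h2 : (L * L) *ᵥ (fun _ => 1) = 0 := by
      rw [← mulVec_mulVec, lapMatrix_mulVec_const_eq_zero, mulVec_zero]
    simpa [mulVec, dotProduct] using congrFun h2 u
  have hsq : ℓ ^ 2 * X u = ∑ w, (L * L) u w * (X w - X u) := by
    have h2 : (L * L) *ᵥ X = ℓ ^ 2 • X := by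
      rw [← mulVec_mulVec, h, mulVec_smul, h, smul_smul, sq]
    simp only [mul_sub, sum_sub_distrib, ← sum_mul, hrow, zero_mul, sub_zero]
    simpa [mulVec, dotProduct] using (congrFun h2 u).symm
  have hterm : ∀ w, (L * L) u w * (X w - X u) ≤
      (mu + if G.Adj u w then lam - 2 * G.maxDegree - mu else 0) * (X w - X u) := by
    intro w
    rcases eq_or_ne u w with rfl | huw
    · simp
    refine mul_le_mul_of_nonpos_right ?_ (sub_nonpos.mpr (hmax w))
    rw [lapMatrix_mul_self_apply_of_ne G huw]
    split_ifs with hadj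
    · have hu : (G.degree u : ℝ) ≤ G.maxDegree := by exact_mod_cast G.degree_le_maxDegree u
      have hw : (G.degree w : ℝ) ≤ G.maxDegree := by exact_mod_cast G.degree_le_maxDegree w
      linarith [hlam u w hadj]
    · simpa using hmu u w huw hadj
  have hnbr : ∑ w ∈ G.neighborFinset u, (X w - X u) = -(ℓ * X u) := by
    have := congrFun h u
    rw [lapMatrix_mulVec_apply, Pi.smul_apply, smul_eq_mul] at this
    rw [sum_sub_distrib, sum_const, card_neighborFinset_eq_degree, nsmul_eq_mul]
    linarith
  have hall : ∑ w, (X w - X u) = -(Fintype.card V * X u) := by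
    rw [sum_sub_distrib, hsum, sum_const, card_univ, nsmul_eq_mul]
    ring
  have hmul : ℓ ^ 2 * X u ≤ ((2 * G.maxDegree - lam + mu) * ℓ - mu * Fintype.card V) * X u :=
    calc ℓ ^ 2 * X u = ∑ w, (L * L) u w * (X w - X u) := hsq
      _ ≤ ∑ w, (mu + if G.Adj u w then lam - 2 * G.maxDegree - mu else 0) * (X w - X u) :=
        sum_le_sum fun w _ => hterm w
      _ = mu * ∑ w, (X w - X u) +
            (lam - 2 * G.maxDegree - mu) * ∑ w ∈ G.neighborFinset u, (X w - X u) := by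
        simp only [add_mul, sum_add_distrib, mul_sum, ite_mul, zero_mul, ← sum_filter,
          neighborFinset_eq_filter]
      _ = _ := by
        rw [hall, hnbr]
        ring
  exact le_of_mul_le_mul_right hmul hpos

theorem dotProduct_lapMatrix_mulVec_single_sub_single {i j : V} (hij : i ≠ j)
    (hadj : ¬ G.Adj i j) :
    (Pi.single i 1 - Pi.single j 1 : V → ℝ) ⬝ᵥ
        (G.lapMatrix ℝ *ᵥ (Pi.single i 1 - Pi.single j 1)) = G.degree i + G.degree j := by
  simp [mulVec_sub, sub_dotProduct, dotProduct_sub, lapMatrix, degMatrix,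
    adjMatrix_apply, hij, hij.symm, hadj, G.adj_comm j i]

theorem two_mul_le_degree_add_degree (hG : G.Connected) {ℓ : ℝ}
    (hℓ : ∀ μ (X : V → ℝ), X ≠ 0 → ∑ i, X i = 0 → G.lapMatrix ℝ *ᵥ X = μ • X → ℓ ≤ μ)
    {i j : V} (hij : i ≠ j) (hadj : ¬ G.Adj i j) : 2 * ℓ ≤ G.degree i + G.degree j := by
  set y : V → ℝ := Pi.single i 1 - Pi.single j 1
  have hdot : ∀ v : V → ℝ, v ⬝ᵥ y = v i - v j := fun v => by
    simp [y, dotProduct_sub, dotProduct_single]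
  have hyy : y ⬝ᵥ y = 2 := by
    rw [hdot]
    simp [y, hij, hij.symm, one_add_one_eq_two]
  have hray := (G.isHermitian_lapMatrix ℝ).mul_dotProduct_self_le_dotProduct_mulVec (ℓ := ℓ)
    (y := y) fun μ v hv hvy => by
      have hμ : μ ≠ 0 := by
        rintro rfl
        rw [zero_smul, lapMatrix_mulVec_eq_zero_iff_forall_reachable] at hv
        exact hvy (by rw [hdot, hv i j (hG.preconnected i j), sub_self])
      refine hℓ μ v ?_ (G.sum_eq_zero_of_lapMatrix_mulVec_eq_smul hμ hv) hv
      rintro rfl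
      simp at hvy
  rwa [hyy, G.dotProduct_lapMatrix_mulVec_single_sub_single hij hadj, mul_comm] at hray

theorem two_mul_le_maxDegree_add_minDegree (hG : G.Connected)
    (hnc : ∃ i j, i ≠ j ∧ ¬ G.Adj i j) {ℓ : ℝ}
    (hℓ : ∀ μ (X : V → ℝ), X ≠ 0 → ∑ i, X i = 0 → G.lapMatrix ℝ *ᵥ X = μ • X → ℓ ≤ μ) :
    2 * ℓ ≤ G.maxDegree + G.minDegree := by
  have : Nonempty V := ⟨hnc.choose⟩
  obtain ⟨i, hi⟩ := G.exists_minimal_degree_vertex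
  obtain ⟨j, hij, hadj⟩ := G.exists_ne_not_adj_of_degree_eq_minDegree hnc hi
  have hj : (G.degree j : ℝ) ≤ G.maxDegree := by exact_mod_cast G.degree_le_maxDegree j
  have := G.two_mul_le_degree_add_degree hG hℓ hij hadj
  rw [← hi] at this
  linarith

end SimpleGraph

theorem laplacian_spread_degree_bound_general (n : ℕ)
    (G : SimpleGraph (Fin n)) [DecidableRel G.Adj]
    (hconn : G.Connected)
    (hnoncomplete : ∃ i j : Fin n, i ≠ j ∧ ¬ G.Adj i j)
    (lam mu : ℝ)
    (hlam : ∀ i j : Fin n, G.Adj i j →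
      lam ≤ ((G.neighborFinset i ∩ G.neighborFinset j).card : ℝ))
    (hmu : ∀ i j : Fin n, i ≠ j → ¬ G.Adj i j →
      mu ≤ ((G.neighborFinset i ∩ G.neighborFinset j).card : ℝ))
    (ℓ₁ ℓₙ₁ : ℝ)
    (hℓ₁ : IsGreatest {l : ℝ | ∃ X : Fin n → ℝ, X ≠ 0 ∧
      (G.lapMatrix ℝ).mulVec X = l • X} ℓ₁)
    (hℓₙ₁ : IsLeast {l : ℝ | ∃ X : Fin n → ℝ, X ≠ 0 ∧ (∑ i, X i) = 0 ∧
      (G.lapMatrix ℝ).mulVec X = l • X} ℓₙ₁) :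
    ℓ₁ - ℓₙ₁ ≤ (G.maxDegree : ℝ) - (G.minDegree : ℝ)
      + (1 / 2) * (Real.sqrt ((2 * (G.maxDegree : ℝ) - lam + mu) ^ 2 - 4 * mu * (n : ℝ))
        + Real.sqrt ((2 * (G.minDegree : ℝ) - lam + mu) ^ 2 - 4 * mu * (n : ℝ)
          - 4 * (G.minDegree : ℝ) ^ 2 + 4 * (G.maxDegree : ℝ) ^ 2)) := by
  obtain ⟨Xₙ, hXₙ, hsumₙ, heigₙ⟩ := hℓₙ₁.1
  have hle : ℓₙ₁ ≤ ℓ₁ := hℓ₁.2 ⟨Xₙ, hXₙ, heigₙ⟩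
  obtain ⟨X₁, hX₁, hsum₁, heig₁⟩ : ∃ X : Fin n → ℝ, X ≠ 0 ∧ ∑ i, X i = 0 ∧
      G.lapMatrix ℝ *ᵥ X = ℓ₁ • X := by
    obtain ⟨X, hX, heig⟩ := hℓ₁.1
    by_cases h₀ : ℓ₁ = 0
    · have : ℓₙ₁ = ℓ₁ := le_antisymm hle (h₀ ▸ G.nonneg_of_lapMatrix_mulVec_eq_smul hXₙ heigₙ)
      exact ⟨Xₙ, hXₙ, hsumₙ, this ▸ heigₙ⟩
    · exact ⟨X, hX, G.sum_eq_zero_of_lapMatrix_mulVec_eq_smul h₀ heig, heig⟩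
  have hq₁ := G.sq_le_of_lapMatrix_mulVec_eq_smul hlam hmu hX₁ hsum₁ heig₁
  have hqₙ := G.sq_le_of_lapMatrix_mulVec_eq_smul hlam hmu hXₙ hsumₙ heigₙ
  rw [Fintype.card_fin] at hq₁ hqₙ
  have hray := G.two_mul_le_maxDegree_add_minDegree hconn hnoncomplete
    fun μ X hX hsum heig => hℓₙ₁.2 ⟨X, hX, hsum, heig⟩
  have hδΔ : (G.minDegree : ℝ) ≤ G.maxDegree := by exact_mod_cast G.minDegree_le_maxDegree
  have h₁ : 2 * ℓ₁ - (2 * G.maxDegree - lam + mu) ≤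
      √((2 * G.maxDegree - lam + mu) ^ 2 - 4 * mu * n) :=
    Real.le_sqrt_of_sq_le (by nlinarith)
  have hₙ : (2 * G.minDegree - lam + mu) - 2 * ℓₙ₁ ≤
      √((2 * G.minDegree - lam + mu) ^ 2 - 4 * mu * n - 4 * G.minDegree ^ 2 +
        4 * G.maxDegree ^ 2) :=
    Real.le_sqrt_of_sq_le
      (by nlinarith [mul_nonneg (sub_nonneg.mpr hδΔ) (sub_nonneg.mpr hray)])
  linarith

/-- **Corollary.** For a simple connected non-complete graph `G` on `n ≥ 2` vertices
with minimum degree `δ`, maximum degree `Δ` and reals `λ ≤ λ(G)`, `μ ≤ μ(G)`, the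
Laplacian spread satisfies
`𝒮_L(G) ≤ Δ − δ + (1/2)[√((2Δ−λ+μ)² − 4μn) + √((2δ−λ+μ)² − 4μn − 4δ² + 4Δ²)]`. -/
theorem laplacian_spread_degree_bound (n : ℕ) (hn : 2 ≤ n)
    (G : SimpleGraph (Fin n)) [DecidableRel G.Adj]
    (hconn : G.Connected)
    (hnoncomplete : ∃ i j : Fin n, i ≠ j ∧ ¬ G.Adj i j)
    (lam mu : ℝ)
    (hlam : ∀ i j : Fin n, G.Adj i j →
      lam ≤ ((G.neighborFinset i ∩ G.neighborFinset j).card : ℝ))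
    (hmu : ∀ i j : Fin n, i ≠ j → ¬ G.Adj i j →
      mu ≤ ((G.neighborFinset i ∩ G.neighborFinset j).card : ℝ))
    (ℓ₁ ℓₙ₁ : ℝ)
    (hℓ₁ : IsGreatest {l : ℝ | ∃ X : Fin n → ℝ, X ≠ 0 ∧
      (G.lapMatrix ℝ).mulVec X = l • X} ℓ₁)
    (hℓₙ₁ : IsLeast {l : ℝ | ∃ X : Fin n → ℝ, X ≠ 0 ∧ (∑ i, X i) = 0 ∧
      (G.lapMatrix ℝ).mulVec X = l • X} ℓₙ₁) :
    ℓ₁ - ℓₙ₁ ≤ (G.maxDegree : ℝ) - (G.minDegree : ℝ)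
      + (1 / 2) * (Real.sqrt ((2 * (G.maxDegree : ℝ) - lam + mu) ^ 2 - 4 * mu * (n : ℝ))
        + Real.sqrt ((2 * (G.minDegree : ℝ) - lam + mu) ^ 2 - 4 * mu * (n : ℝ)
          - 4 * (G.minDegree : ℝ) ^ 2 + 4 * (G.maxDegree : ℝ) ^ 2)) :=
  laplacian_spread_degree_bound_general n G hconn hnoncomplete lam mu hlam hmu ℓ₁ ℓₙ₁ hℓ₁ hℓₙ₁
end

section
/- Let G be a connected strongly regular graph with parameters (n, k, λ, μ) that is not a complete graph (so n ≠ k + 1). Then its nontrivial Laplacian eigenvalues are exactly ℓ_1(G) = ( 2k − λ + μ + sqrt( (λ − μ)² + 4(k − μ) ) ) / 2 and ℓ_{n−1}(G) = ( 2k − λ + μ − sqrt( (λ − μ)² + 4(k − μ) ) ) / 2; in particular these bounds coincide with the upper bound ( 2Δ − λ + μ + sqrt( (2Δ − λ + μ)² − 4μn ) )/2 on ℓ_1(G) and the lower bound ( 2δ − λ + μ − sqrt( (2δ − λ + μ)² − 4μn ) )/2 on ℓ_{n−1}(G) with δ = Δ = k, so strongly regular graphs attain these bounds with equality. -/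
/-!
On vectors with coordinate sum zero the identity `A² = kI + λA + μ(J - I - A)` reads
`A² = (k - μ)I + (λ - μ)A`, so the Laplacian `L = kI - A` satisfies `L² = sL - cI` with
`s = 2k - λ + μ` and `c = k² - (λ - μ)k - (k - μ)`. Hence every nontrivial eigenvalue is a root of
`x² - sx + c`, whose discriminant is `(λ - μ)² + 4(k - μ)`. Conversely, if `l` and `m` are the two
roots, then `(L - m)x` is an `l`-eigenvector for any sum-zero `x` that is not an `m`-eigenvector,
and such an `x` exists once some vertex has both a neighbour and a non-neighbour. Applying the
identity to the all-ones vector gives `c = μn`, which matches the two forms of the discriminant.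
-/

open Finset Matrix

namespace Module.End

variable {K M : Type*} [Field K] [AddCommGroup M] [Module K M]
  {f : Module.End K M} {p : Submodule K M} {s c : K}

theorem sq_sub_mul_add_eq_zero_of_apply_eq_smul
    (hsq : ∀ x ∈ p, f (f x) = s • f x - c • x) {l : K} {x : M} (hx : x ∈ p) (hx0 : x ≠ 0)
    (hfx : f x = l • x) : l ^ 2 - s * l + c = 0 := by
  have h : (l ^ 2 - s * l + c) • x = 0 := by
    have := hsq x hx
    rw [hfx, map_smul, hfx, smul_smul, smul_smul] at this
    rw [sub_add, sub_smul, sub_smul, sq, this]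
    module
  exact (smul_eq_zero.mp h).resolve_right hx0

theorem exists_apply_eq_smul_of_sq_sub_mul_add_eq_zero (hf : ∀ x ∈ p, f x ∈ p)
    (hsq : ∀ x ∈ p, f (f x) = s • f x - c • x) (hns : ∀ m : K, ∃ x ∈ p, f x ≠ m • x)
    {l : K} (hl : l ^ 2 - s * l + c = 0) : ∃ x ∈ p, x ≠ 0 ∧ f x = l • x := by
  obtain ⟨x, hx, hfx⟩ := hns (s - l)
  refine ⟨f x - (s - l) • x, p.sub_mem (hf x hx) (p.smul_mem _ hx), sub_ne_zero.mpr hfx, ?_⟩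
  rw [map_sub, map_smul, hsq x hx]
  have hc : c = l * (s - l) := by linear_combination hl
  rw [hc]
  module

theorem exists_apply_eq_smul_iff (hf : ∀ x ∈ p, f x ∈ p)
    (hsq : ∀ x ∈ p, f (f x) = s • f x - c • x) (hns : ∀ m : K, ∃ x ∈ p, f x ≠ m • x) (l : K) :
    (∃ x ∈ p, x ≠ 0 ∧ f x = l • x) ↔ l ^ 2 - s * l + c = 0 :=
  ⟨fun ⟨_, hx, hx0, hfx⟩ ↦ sq_sub_mul_add_eq_zero_of_apply_eq_smul hsq hx hx0 hfx,
    exists_apply_eq_smul_of_sq_sub_mul_add_eq_zero hf hsq hns⟩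

end Module.End

theorem sq_sub_mul_add_eq_zero_iff {s c l : ℝ} (hd : 0 ≤ s ^ 2 - 4 * c) :
    l ^ 2 - s * l + c = 0 ↔
      l = (s + √(s ^ 2 - 4 * c)) / 2 ∨ l = (s - √(s ^ 2 - 4 * c)) / 2 := by
  have h := quadratic_eq_zero_iff one_ne_zero (b := -s) (c := c)
    (by rw [discrim, ← sq, Real.sq_sqrt hd]; ring) l
  simp only [neg_neg, mul_one, one_mul] at h
  rw [← h]
  constructor <;> intro h' <;> linear_combination h'

def zeroSumSubmodule (R V : Type*) [CommSemiring R] [Fintype V] : Submodule R (V → R) where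
  carrier := {x | ∑ v, x v = 0}
  add_mem' hx hy := by simp_all [sum_add_distrib]
  zero_mem' := by simp
  smul_mem' a x hx := by simp_all [← mul_sum]

@[simp]
theorem mem_zeroSumSubmodule {R V : Type*} [CommSemiring R] [Fintype V] {x : V → R} :
    x ∈ zeroSumSubmodule R V ↔ ∑ v, x v = 0 :=
  Iff.rfl

namespace SimpleGraph

variable {V R : Type*} [Fintype V] {G : SimpleGraph V} [DecidableRel G.Adj]

theorem IsSRGWith.mu_le {n k ℓ μ : ℕ} (h : G.IsSRGWith n k ℓ μ) {v w : V} (hvw : v ≠ w)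
    (hna : ¬G.Adj v w) : μ ≤ k := by
  rw [← h.of_not_adj hvw hna, ← h.regular v, ← card_neighborFinset_eq_degree,
    ← Set.toFinset_card]
  exact card_le_card fun u hu ↦ by simpa using (Set.mem_toFinset.mp hu).1

variable [DecidableEq V]

theorem sum_lapMatrix_mulVec [CommRing R] (x : V → R) : ∑ v, (G.lapMatrix R *ᵥ x) v = 0 := by
  have h := dotProduct_mulVec (fun _ ↦ (1 : R)) (G.lapMatrix R) x
  rw [← mulVec_transpose, (G.isSymm_lapMatrix R).eq, lapMatrix_mulVec_const_eq_zero,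
    zero_dotProduct] at h
  simpa [dotProduct] using h

theorem compl_adjMatrix_mulVec_apply [Ring R] (x : V → R) (v : V) :
    (Gᶜ.adjMatrix R *ᵥ x) v = ∑ u, x u - x v - (G.adjMatrix R *ᵥ x) v := by
  rw [adjMatrix_mulVec_apply, adjMatrix_mulVec_apply, neighborFinset_compl,
    sum_sdiff_eq_sub (by simp), sum_singleton, ← sum_compl_add_sum (G.neighborFinset v)]
  abel

theorem IsRegularOfDegree.lapMatrix_mulVec [Ring R] {k : ℕ} (hG : G.IsRegularOfDegree k)
    (x : V → R) : G.lapMatrix R *ᵥ x = (k : R) • x - G.adjMatrix R *ᵥ x := by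
  ext v
  rw [lapMatrix_mulVec_apply, Pi.sub_apply, adjMatrix_mulVec_apply, hG v, Pi.smul_apply,
    smul_eq_mul]

theorem lapMatrix_mulVec_single_sub_single_apply [Ring R] {i j : V} (hij : i ≠ j) :
    (G.lapMatrix R *ᵥ (Pi.single i 1 - Pi.single j 1)) i =
      G.degree i + if G.Adj i j then 1 else 0 := by
  rw [lapMatrix_mulVec_apply]
  simp [sum_sub_distrib, sum_pi_single', hij]

theorem exists_sum_eq_zero_lapMatrix_mulVec_ne_smul [Ring R] [Nontrivial R] {i j j' : V}
    (hj : G.Adj i j) (hj' : i ≠ j') (hnj' : ¬G.Adj i j') (m : R) :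
    ∃ x : V → R, ∑ v, x v = 0 ∧ G.lapMatrix R *ᵥ x ≠ m • x := by
  by_contra! h
  have hm (j : V) (hij : i ≠ j) : (G.degree i : R) + (if G.Adj i j then 1 else 0) = m := by
    have := congrFun (h (Pi.single i 1 - Pi.single j 1) (by simp [sum_sub_distrib])) i
    simpa [lapMatrix_mulVec_single_sub_single_apply hij, hij] using this
  have hadj : (G.degree i : R) + 1 = m := by simpa [hj] using hm j hj.ne
  have hnadj : (G.degree i : R) = m := by simpa [hnj'] using hm j' hj'
  exact one_ne_zero (add_eq_left.mp (hadj.trans hnadj.symm))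

theorem exists_ne_not_adj_of_degree_add_one_ne {v : V}
    (hv : G.degree v + 1 ≠ Fintype.card V) : ∃ w, v ≠ w ∧ ¬G.Adj v w := by
  have hlt := G.degree_lt_card_verts v
  obtain ⟨w, hw⟩ := (Gᶜ.degree_pos_iff_exists_adj v).mp (by rw [degree_compl]; omega)
  exact ⟨w, hw.1, hw.2⟩

namespace IsSRGWith

variable {n k ℓ μ : ℕ}

theorem adjMatrix_mulVec_mulVec_apply [CommRing R] (h : G.IsSRGWith n k ℓ μ) (x : V → R)
    (v : V) : (G.adjMatrix R *ᵥ (G.adjMatrix R *ᵥ x)) v =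
      k * x v + ℓ * (G.adjMatrix R *ᵥ x) v + μ * (∑ u, x u - x v - (G.adjMatrix R *ᵥ x) v) := by
  rw [mulVec_mulVec, ← sq, h.matrix_eq]
  simp only [← Nat.cast_smul_eq_nsmul R, add_mulVec, smul_mulVec, one_mulVec, Pi.add_apply,
    Pi.smul_apply, smul_eq_mul, compl_adjMatrix_mulVec_apply]

theorem mu_mul_card_eq [CommRing R] [Nonempty V] (h : G.IsSRGWith n k ℓ μ) :
    (μ : R) * n = k ^ 2 - (ℓ - μ) * k - (k - μ) := by
  obtain ⟨v⟩ := ‹Nonempty V›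
  have hA (a : R) : G.adjMatrix R *ᵥ Function.const V a = Function.const V (k * a) :=
    funext fun _ ↦ adjMatrix_mulVec_const_apply_of_regular h.regular
  have hA2 := h.adjMatrix_mulVec_mulVec_apply (Function.const V (1 : R)) v
  rw [hA, hA] at hA2
  simp only [Function.const_apply, sum_const, card_univ, h.card, nsmul_eq_mul, mul_one] at hA2
  linear_combination -hA2

theorem lapMatrix_mulVec_mulVec_of_sum_eq_zero [CommRing R] (h : G.IsSRGWith n k ℓ μ)
    {x : V → R} (hx : ∑ v, x v = 0) :
    G.lapMatrix R *ᵥ (G.lapMatrix R *ᵥ x) =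
      (2 * k - ℓ + μ : R) • (G.lapMatrix R *ᵥ x) - (k ^ 2 - (ℓ - μ) * k - (k - μ) : R) • x := by
  have hL := h.regular.lapMatrix_mulVec (R := R)
  ext v
  rw [hL, hL x, mulVec_sub, mulVec_smul]
  simp only [Pi.sub_apply, Pi.smul_apply, smul_eq_mul]
  rw [h.adjMatrix_mulVec_mulVec_apply, hx]
  ring

end IsSRGWith

end SimpleGraph

/-- **Corollary (strongly regular graphs attain the bounds).** For a connected
strongly regular graph `G` with parameters `(n, k, λ, μ)` that is not complete
(`n ≠ k + 1`), the nontrivial Laplacian eigenvalues are exactly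
`(2k − λ + μ ± √((λ−μ)² + 4(k−μ)))/2`, and these coincide with the bounds
`(2k − λ + μ ± √((2k − λ + μ)² − 4μn))/2` (with `δ = Δ = k`). -/
theorem srg_attains_bounds (n k lam mu : ℕ) (G : SimpleGraph (Fin n))
    [DecidableRel G.Adj]
    (hsrg : G.IsSRGWith n k lam mu)
    (hconn : G.Connected)
    (hnc : n ≠ k + 1) :
    (∀ l : ℝ,
      (∃ X : Fin n → ℝ, X ≠ 0 ∧ (∑ i, X i) = 0 ∧ (G.lapMatrix ℝ).mulVec X = l • X) ↔
      (l = (2 * (k : ℝ) - (lam : ℝ) + (mu : ℝ)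
          + Real.sqrt (((lam : ℝ) - (mu : ℝ)) ^ 2 + 4 * ((k : ℝ) - (mu : ℝ)))) / 2 ∨
       l = (2 * (k : ℝ) - (lam : ℝ) + (mu : ℝ)
          - Real.sqrt (((lam : ℝ) - (mu : ℝ)) ^ 2 + 4 * ((k : ℝ) - (mu : ℝ)))) / 2)) ∧
    (2 * (k : ℝ) - (lam : ℝ) + (mu : ℝ)
        + Real.sqrt (((lam : ℝ) - (mu : ℝ)) ^ 2 + 4 * ((k : ℝ) - (mu : ℝ)))) / 2
      = (2 * (k : ℝ) - (lam : ℝ) + (mu : ℝ)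
        + Real.sqrt ((2 * (k : ℝ) - (lam : ℝ) + (mu : ℝ)) ^ 2 - 4 * (mu : ℝ) * (n : ℝ))) / 2 ∧
    (2 * (k : ℝ) - (lam : ℝ) + (mu : ℝ)
        - Real.sqrt (((lam : ℝ) - (mu : ℝ)) ^ 2 + 4 * ((k : ℝ) - (mu : ℝ)))) / 2
      = (2 * (k : ℝ) - (lam : ℝ) + (mu : ℝ)
        - Real.sqrt ((2 * (k : ℝ) - (lam : ℝ) + (mu : ℝ)) ^ 2 - 4 * (mu : ℝ) * (n : ℝ))) / 2 := by
  obtain ⟨v⟩ := hconn.nonempty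
  obtain ⟨w, hvw, hnadj⟩ := G.exists_ne_not_adj_of_degree_add_one_ne (v := v)
    (by rwa [hsrg.regular v, Fintype.card_fin, ne_comm])
  have : Nontrivial (Fin n) := nontrivial_of_ne v w hvw
  obtain ⟨u, hadj⟩ := hconn.preconnected.exists_adj_of_nontrivial v
  have hmu : (mu : ℝ) ≤ k := by exact_mod_cast hsrg.mu_le hvw hnadj
  have hdiscr : (2 * (k : ℝ) - lam + mu) ^ 2 - 4 * (k ^ 2 - (lam - mu) * k - (k - mu)) =
      ((lam : ℝ) - mu) ^ 2 + 4 * (k - mu) := by ring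
  have hcard :
      (2 * (k : ℝ) - lam + mu) ^ 2 - 4 * mu * n = ((lam : ℝ) - mu) ^ 2 + 4 * (k - mu) := by
    rw [mul_assoc, hsrg.mu_mul_card_eq, hdiscr]
  refine ⟨fun l ↦ ?_, by rw [hcard], by rw [hcard]⟩
  rw [← hdiscr, ← sq_sub_mul_add_eq_zero_iff (by
      rw [hdiscr]; exact add_nonneg (sq_nonneg _) (by linarith)),
    ← Module.End.exists_apply_eq_smul_iff (f := toLin' (G.lapMatrix ℝ))
      (p := zeroSumSubmodule ℝ (Fin n)) (fun x _ ↦ G.sum_lapMatrix_mulVec x)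
      (fun x hx ↦ hsrg.lapMatrix_mulVec_mulVec_of_sum_eq_zero hx)
      (fun m ↦ G.exists_sum_eq_zero_lapMatrix_mulVec_ne_smul hadj hvw hnadj m)]
  simp only [mem_zeroSumSubmodule, toLin'_apply]
  exact exists_congr fun _ ↦ and_left_comm
end

section
/- Let n ≥ 6 and let G be a simple connected (n−3)-regular graph on n vertices, so that its complement G^c is a disjoint union of cycles. Then G is strongly regular if and only if every connected component of G^c has exactly 3 vertices; and in that case ℓ_1(G) = n and ℓ_{n−1}(G) = n − 3. -/
/-!
Each vertex `v` of an `(n-3)`-regular graph `G` is non-adjacent to exactly three vertices, itself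
included; call them `P v`. The components of `Gᶜ` are triangles exactly when non-adjacency is
transitive, i.e. when `G` is complete multipartite with the `P v` as parts, and then the common
neighbours of `v, w` are the complement of `P v ∪ P w`, which makes `G` strongly regular.
Conversely, if `G` is strongly regular then so is the 2-regular graph `Gᶜ`; for `n ≥ 6` the
identity `k (k - λ - 1) = (n - k - 1) μ` forces `λ > 0`, so every edge of `Gᶜ` lies in a triangle.

For the spectrum, `(L x)_v = d x_v - ∑ x + ∑_{P v} x`. The last term is a positive semidefinite
block matrix of ones, which gives `d = n - 3` as a lower bound on `1ᗮ`, attained by `e_a - e_b`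
inside one part; `n` bounds every Laplacian eigenvalue since `L(G) ≤ L(Kₙ)`, and is attained by a
vector constant on parts.
-/

open Finset Matrix

namespace SimpleGraph

variable {V : Type*} {G : SimpleGraph V}

theorem IsCompleteMultipartite.adj_iff_adj_of_not_adj (h : G.IsCompleteMultipartite)
    {u v w : V} (hvw : ¬G.Adj v w) : G.Adj u v ↔ G.Adj u w :=
  ⟨fun huv ↦ by_contra fun huw ↦ h.trans u w v huw (fun hwv ↦ hvw hwv.symm) huv,
    fun huw ↦ by_contra fun huv ↦ h.trans u v w huv hvw huw⟩

theorem reachable_compl_of_not_adj {v w : V} (h : ¬G.Adj v w) : Gᶜ.Reachable v w := by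
  obtain rfl | hne := eq_or_ne v w
  · rfl
  · exact ((compl_adj G v w).2 ⟨hne, h⟩).reachable

theorem IsCompleteMultipartite.reachable_compl_iff (h : G.IsCompleteMultipartite) {v w : V} :
    Gᶜ.Reachable v w ↔ ¬G.Adj v w := by
  refine ⟨fun hr ↦ ?_, reachable_compl_of_not_adj⟩
  have : Std.Refl (¬G.Adj · ·) := ⟨G.loopless.irrefl⟩
  have : IsTrans V (¬G.Adj · ·) := h
  rw [reachable_iff_reflTransGen] at hr
  have := Relation.ReflTransGen.mono (p := (¬G.Adj · ·))
    (fun a b hab ↦ ((compl_adj G a b).1 hab).2) v w hr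
  rwa [Relation.reflTransGen_eq_self] at this

section Finite

variable [Fintype V] [DecidableRel G.Adj]

theorem IsRegularOfDegree.adj_of_adj_of_adj (hreg : G.IsRegularOfDegree 2)
    (htri : ∀ ⦃u v⦄, G.Adj u v → ∃ w, G.Adj u w ∧ G.Adj v w) {v a b : V}
    (ha : G.Adj v a) (hb : G.Adj v b) (hab : a ≠ b) : G.Adj a b := by
  classical
  obtain ⟨x, hvx, hax⟩ := htri ha
  obtain rfl | hxb := eq_or_ne x b
  · exact hax
  have hsub : ({a, b, x} : Finset V) ⊆ G.neighborFinset v := by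
    simp [insert_subset_iff, ha, hb, hvx]
  have := card_le_card hsub
  rw [card_neighborFinset_eq_degree, hreg v, card_insert_of_notMem (by simp [hab, hax.ne]),
    card_pair hxb.symm] at this
  omega

theorem IsSRGWith.lambda_pos_of_degree_two {n ℓ μ : ℕ} (h : G.IsSRGWith n 2 ℓ μ) (hn : 6 ≤ n) :
    0 < ℓ := by
  have hparam := h.param_eq G (by omega)
  rw [Nat.pos_iff_ne_zero]
  rintro rfl
  obtain _ | μ := μ
  · simp at hparam
  · have : 3 * (μ + 1) ≤ (n - 2 - 1) * (μ + 1) := Nat.mul_le_mul_right _ (by omega)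
    omega

variable [DecidableEq V]

theorem IsRegularOfDegree.card_compl_neighborFinset {d : ℕ} (hreg : G.IsRegularOfDegree d)
    (v : V) : #(G.neighborFinset v)ᶜ = Fintype.card V - d := by
  rw [card_compl, card_neighborFinset_eq_degree, hreg v]

theorem card_commonNeighbors_eq_card_sub (v w : V) :
    Fintype.card (G.commonNeighbors v w) =
      Fintype.card V - #((G.neighborFinset v)ᶜ ∪ (G.neighborFinset w)ᶜ) := by
  rw [← Set.toFinset_card, ← card_compl, compl_union, compl_compl, compl_compl]
  congr 1
  ext u
  simp [mem_commonNeighbors]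

theorem IsCompleteMultipartite.compl_neighborFinset_eq (h : G.IsCompleteMultipartite) {v w : V}
    (hvw : ¬G.Adj v w) : (G.neighborFinset w)ᶜ = (G.neighborFinset v)ᶜ := by
  ext u
  simp only [mem_compl, mem_neighborFinset, adj_comm _ _ u]
  exact not_congr (h.adj_iff_adj_of_not_adj hvw).symm

theorem IsSRGWith.isCompleteMultipartite {n k ℓ μ : ℕ} (h : G.IsSRGWith n k ℓ μ) (hn : 6 ≤ n)
    (hreg : Gᶜ.IsRegularOfDegree 2) : G.IsCompleteMultipartite := by
  have hc : Gᶜ.IsSRGWith n 2 _ _ := { h.compl with regular := hreg }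
  have htri : ∀ ⦃u v⦄, Gᶜ.Adj u v → ∃ w, Gᶜ.Adj u w ∧ Gᶜ.Adj v w := fun u v huv ↦ by
    obtain ⟨⟨w, hw⟩⟩ :=
      Fintype.card_pos_iff.1 ((hc.of_adj u v huv).symm ▸ hc.lambda_pos_of_degree_two hn)
    exact ⟨w, (mem_commonNeighbors _).1 hw⟩
  by_contra hG
  obtain ⟨v, a, b, hP⟩ := exists_isPathGraph3Compl_of_not_isCompleteMultipartite hG
  have hab := hreg.adj_of_adj_of_adj htri ((compl_adj G v a).2 ⟨hP.ne_fst, hP.not_adj_fst⟩)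
    ((compl_adj G v b).2 ⟨hP.ne_snd, hP.not_adj_snd⟩) hP.fst_ne_snd
  exact ((compl_adj G a b).1 hab).2 hP.adj

theorem IsCompleteMultipartite.isSRGWith {d : ℕ} (h : G.IsCompleteMultipartite)
    (hreg : G.IsRegularOfDegree d) :
    G.IsSRGWith (Fintype.card V) d (2 * d - Fintype.card V) d where
  card := rfl
  regular := hreg
  of_adj v w hvw := by
    have hdisj : Disjoint (G.neighborFinset v)ᶜ (G.neighborFinset w)ᶜ := by
      refine Finset.disjoint_left.2 fun u hv hw ↦ ?_
      simp only [mem_compl, mem_neighborFinset] at hv hw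
      exact hv ((h.adj_iff_adj_of_not_adj (by rwa [adj_comm])).2 hvw)
    have := G.degree_lt_card_verts v
    have := hreg v
    rw [card_commonNeighbors_eq_card_sub, card_union_of_disjoint hdisj,
      hreg.card_compl_neighborFinset, hreg.card_compl_neighborFinset]
    omega
  of_not_adj v w hne hvw := by
    have := G.degree_lt_card_verts v
    rw [card_commonNeighbors_eq_card_sub, h.compl_neighborFinset_eq hvw, union_self,
      hreg.card_compl_neighborFinset, ← hreg v]
    omega

theorem isCompleteMultipartite_iff_ncard_supp {d : ℕ} (hreg : G.IsRegularOfDegree d) :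
    G.IsCompleteMultipartite ↔
      ∀ v, (Gᶜ.connectedComponentMk v).supp.ncard = Fintype.card V - d := by
  have hsub (v : V) : (↑(G.neighborFinset v)ᶜ : Set V) ⊆ (Gᶜ.connectedComponentMk v).supp :=
    fun w hw ↦ by
      simp only [coe_compl, Set.mem_compl_iff, mem_coe, mem_neighborFinset] at hw
      exact ConnectedComponent.sound (reachable_compl_of_not_adj hw).symm
  have hcard (v : V) : (↑(G.neighborFinset v)ᶜ : Set V).ncard = Fintype.card V - d := by
    rw [Set.ncard_coe_finset, hreg.card_compl_neighborFinset]
  refine ⟨fun h v ↦ ?_, fun h ↦ ⟨fun u v w huv hvw ↦ ?_⟩⟩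
  · rw [← hcard v]
    refine congrArg _ (Set.Subset.antisymm (hsub v) fun w hw ↦ ?_).symm
    simpa using h.reachable_compl_iff.1 (ConnectedComponent.exact hw).symm
  · have hP (x : V) := Set.eq_of_subset_of_ncard_le (hsub x) ((h x).trans (hcard x).symm).le
    have hw : w ∈ (Gᶜ.connectedComponentMk v).supp := hP v ▸ by simpa using hvw
    rw [← ConnectedComponent.sound (reachable_compl_of_not_adj huv), ← hP u] at hw
    simpa using hw

theorem dotProduct_lapMatrix_mulVec_le (x : V → ℝ) :
    x ⬝ᵥ (G.lapMatrix ℝ *ᵥ x) ≤ Fintype.card V * (x ⬝ᵥ x) - (∑ i, x i) ^ 2 := by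
  have hall : ∑ i, ∑ j, (x i - x j) ^ 2 = 2 * (Fintype.card V * (x ⬝ᵥ x) - (∑ i, x i) ^ 2) := by
    simp only [sub_sq, sum_add_distrib, sum_sub_distrib, sum_const, card_univ, nsmul_eq_mul,
      mul_assoc, ← mul_sum, ← sum_mul, dotProduct, ← sq]
    ring
  rw [← toLinearMap₂'_apply', lapMatrix_toLinearMap₂', div_le_iff₀ two_pos, mul_comm, ← hall]
  gcongr with i _ j _
  split_ifs
  exacts [le_rfl, sq_nonneg _]

theorem le_card_of_lapMatrix_mulVec_eq_smul {x : V → ℝ} {l : ℝ} (hx : x ≠ 0)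
    (h : G.lapMatrix ℝ *ᵥ x = l • x) : l ≤ Fintype.card V := by
  have hpos : 0 < x ⬝ᵥ x := by simpa using dotProduct_self_star_pos_iff.2 hx
  have := dotProduct_lapMatrix_mulVec_le (G := G) x
  rw [h, dotProduct_smul, smul_eq_mul] at this
  nlinarith [sq_nonneg (∑ i, x i)]

theorem lapMatrix_mulVec_apply_eq_sum_compl {R : Type*} [NonAssocRing R] (x : V → R) (v : V) :
    (G.lapMatrix R *ᵥ x) v =
      G.degree v * x v - ∑ i, x i + ∑ u ∈ (G.neighborFinset v)ᶜ, x u := by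
  rw [lapMatrix_mulVec_apply, ← sum_add_sum_compl (G.neighborFinset v) x]
  abel

theorem IsRegularOfDegree.lapMatrix_mulVec_eq_smul {R : Type*} [CommRing R] {d : ℕ}
    (hreg : G.IsRegularOfDegree d) {x : V → R} (hx : ∑ i, x i = 0) {c : R}
    (hc : ∀ v, ∑ u ∈ (G.neighborFinset v)ᶜ, x u = c * x v) :
    G.lapMatrix R *ᵥ x = (d + c) • x := by
  ext v
  rw [lapMatrix_mulVec_apply_eq_sum_compl, hreg.degree_eq, hx, hc, Pi.smul_apply, smul_eq_mul]
  ring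

theorem IsCompleteMultipartite.sum_mul_sum_compl_neighborFinset_nonneg
    (h : G.IsCompleteMultipartite) (x : V → ℝ) :
    0 ≤ ∑ v, x v * ∑ u ∈ (G.neighborFinset v)ᶜ, x u := by
  set P : V → Finset V := fun v ↦ (G.neighborFinset v)ᶜ
  set S : V → ℝ := fun v ↦ ∑ u ∈ P v, x u
  have hP {u v : V} (hu : u ∈ P v) : P u = P v :=
    h.compl_neighborFinset_eq (by simpa [P] using hu)
  have key : ∑ v, S v ^ 2 / #(P v) = ∑ v, x v * S v := calc
    ∑ v, S v ^ 2 / #(P v)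
      = ∑ v, ∑ u ∈ P v, x u * S u / #(P u) := by
        refine sum_congr rfl fun v _ ↦ ?_
        have hS (u : V) (hu : u ∈ P v) : x u * S u / #(P u) = x u * S v / #(P v) := by
          simp only [S, hP hu]
        rw [sum_congr rfl hS, ← sum_div, ← sum_mul, sq]
    _ = ∑ u, ∑ v ∈ P u, x u * S u / #(P u) := sum_comm' (by simp [P, adj_comm])
    _ = ∑ u, x u * S u := by
        refine sum_congr rfl fun u _ ↦ ?_
        have : (#(P u) : ℝ) ≠ 0 := Nat.cast_ne_zero.2 (card_ne_zero_of_mem (a := u) (by simp [P]))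
        rw [sum_const, nsmul_eq_mul]
        field_simp
  rw [← key]
  exact sum_nonneg fun v _ ↦ by positivity

theorem IsCompleteMultipartite.degree_le_of_lapMatrix_mulVec_eq_smul
    (h : G.IsCompleteMultipartite) {d : ℕ} (hreg : G.IsRegularOfDegree d) {x : V → ℝ} {l : ℝ}
    (hx : x ≠ 0) (hsum : ∑ i, x i = 0) (hl : G.lapMatrix ℝ *ᵥ x = l • x) : (d : ℝ) ≤ l := by
  have hpos : 0 < x ⬝ᵥ x := by simpa using dotProduct_self_star_pos_iff.2 hx
  have hquad : x ⬝ᵥ (G.lapMatrix ℝ *ᵥ x) =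
      d * (x ⬝ᵥ x) + ∑ v, x v * ∑ u ∈ (G.neighborFinset v)ᶜ, x u := by
    simp only [dotProduct, lapMatrix_mulVec_apply_eq_sum_compl, hreg.degree_eq, hsum, mul_sum,
      ← sum_add_distrib]
    refine sum_congr rfl fun v _ ↦ ?_
    rw [sub_zero, mul_add, mul_sum]
    ring
  rw [hl, dotProduct_smul, smul_eq_mul] at hquad
  nlinarith [h.sum_mul_sum_compl_neighborFinset_nonneg x]

theorem IsCompleteMultipartite.exists_lapMatrix_mulVec_eq_card_smul [Nonempty V]
    (h : G.IsCompleteMultipartite) {d : ℕ} (hreg : G.IsRegularOfDegree d) (hd : d ≠ 0) :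
    ∃ x : V → ℝ, x ≠ 0 ∧ G.lapMatrix ℝ *ᵥ x = (Fintype.card V : ℝ) • x := by
  obtain ⟨v₀⟩ := ‹Nonempty V›
  set x : V → ℝ := fun u ↦ (if G.Adj v₀ u then (Fintype.card V : ℝ) else 0) - d
  have hsum : ∑ i, x i = 0 := by
    simp only [x, sum_sub_distrib, ← sum_filter, ← neighborFinset_eq_filter, sum_const,
      card_neighborFinset_eq_degree, hreg.degree_eq, card_univ, nsmul_eq_mul]
    ring
  have hparts (v : V) : ∑ u ∈ (G.neighborFinset v)ᶜ, x u = (Fintype.card V - d : ℝ) * x v := by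
    have hdv : d ≤ Fintype.card V := hreg.degree_eq v ▸ (G.degree_lt_card_verts v).le
    rw [sum_congr rfl fun u hu ↦ ?_, sum_const, hreg.card_compl_neighborFinset, nsmul_eq_mul,
      Nat.cast_sub hdv]
    simp only [mem_compl, mem_neighborFinset] at hu
    simp [x, h.adj_iff_adj_of_not_adj hu]
  refine ⟨x, fun h0 ↦ hd ?_, ?_⟩
  · simpa [x] using congrFun h0 v₀
  · rw [hreg.lapMatrix_mulVec_eq_smul hsum hparts]
    ring_nf

theorem IsCompleteMultipartite.exists_lapMatrix_mulVec_eq_degree_smul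
    (h : G.IsCompleteMultipartite) {d : ℕ} (hreg : G.IsRegularOfDegree d)
    (hd : d + 2 ≤ Fintype.card V) :
    ∃ x : V → ℝ, x ≠ 0 ∧ ∑ i, x i = 0 ∧ G.lapMatrix ℝ *ᵥ x = (d : ℝ) • x := by
  obtain ⟨v₀⟩ : Nonempty V := Fintype.card_pos_iff.1 (by omega)
  obtain ⟨a, ha, b, hb, hab⟩ := one_lt_card.1 <| show 1 < #(G.neighborFinset v₀)ᶜ by
    rw [hreg.card_compl_neighborFinset]
    omega
  simp only [mem_compl, mem_neighborFinset] at ha hb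
  have hnab : ¬G.Adj a b := fun hab' ↦ ha ((h.adj_iff_adj_of_not_adj hb).2 hab').symm
  set x : V → ℝ := Pi.single a 1 - Pi.single b 1
  have hsum : ∑ i, x i = 0 := by simp [x, sum_sub_distrib]
  refine ⟨x, fun h0 ↦ by simpa [x, hab] using congrFun h0 a, hsum, ?_⟩
  have hparts (v : V) : ∑ u ∈ (G.neighborFinset v)ᶜ, x u = 0 * x v := by
    simp [x, sum_sub_distrib, sum_pi_single', h.adj_iff_adj_of_not_adj hnab]
  simpa using hreg.lapMatrix_mulVec_eq_smul hsum hparts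

end Finite

end SimpleGraph

theorem srg_of_nMinusThree_regular_general (n : ℕ) (hn : 6 ≤ n)
    (G : SimpleGraph (Fin n)) [DecidableRel G.Adj]
    (hreg : G.IsRegularOfDegree (n - 3)) :
    ((∃ k lam mu : ℕ, G.IsSRGWith n k lam mu) ↔
      (∀ v : Fin n, ((Gᶜ).connectedComponentMk v).supp.ncard = 3)) ∧
    ((∀ v : Fin n, ((Gᶜ).connectedComponentMk v).supp.ncard = 3) →
      IsGreatest {l : ℝ | ∃ X : Fin n → ℝ, X ≠ 0 ∧
        (G.lapMatrix ℝ).mulVec X = l • X} (n : ℝ) ∧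
      IsLeast {l : ℝ | ∃ X : Fin n → ℝ, X ≠ 0 ∧ (∑ i, X i) = 0 ∧
        (G.lapMatrix ℝ).mulVec X = l • X} ((n : ℝ) - 3)) := by
  have hparts : G.IsCompleteMultipartite ↔ ∀ v, (Gᶜ.connectedComponentMk v).supp.ncard = 3 := by
    simpa [show n - (n - 3) = 3 by omega] using
      SimpleGraph.isCompleteMultipartite_iff_ncard_supp hreg
  have hcompl : Gᶜ.IsRegularOfDegree 2 := by
    simpa [show n - 1 - (n - 3) = 2 by omega] using hreg.compl
  have hdeg : ((n - 3 : ℕ) : ℝ) = n - 3 := by rw [Nat.cast_sub (by omega), Nat.cast_ofNat]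
  have : Nonempty (Fin n) := ⟨⟨0, by omega⟩⟩
  rw [← hparts]
  refine ⟨⟨fun ⟨_, _, _, h⟩ ↦ h.isCompleteMultipartite hn hcompl,
    fun h ↦ ⟨_, _, _, by simpa using h.isSRGWith hreg⟩⟩, fun h ↦ ⟨⟨?_, ?_⟩, ⟨?_, ?_⟩⟩⟩
  · simpa using h.exists_lapMatrix_mulVec_eq_card_smul hreg (by omega)
  · rintro l ⟨x, hx, hl⟩
    simpa using SimpleGraph.le_card_of_lapMatrix_mulVec_eq_smul hx hl
  · simpa [hdeg] using h.exists_lapMatrix_mulVec_eq_degree_smul hreg (by simp; omega)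
  · rintro l ⟨x, hx, hsum, hl⟩
    simpa [hdeg] using h.degree_le_of_lapMatrix_mulVec_eq_smul hreg hx hsum hl

/-- **Proposition.** For `n ≥ 6` and a simple connected `(n−3)`-regular graph `G`
on `n` vertices: `G` is strongly regular iff every connected component of `Gᶜ` has
exactly 3 vertices; and in that case `ℓ₁(G) = n` (the greatest Laplacian eigenvalue)
and `ℓ_{n−1}(G) = n − 3` (the least nontrivial Laplacian eigenvalue). -/
theorem srg_of_nMinusThree_regular (n : ℕ) (hn : 6 ≤ n)
    (G : SimpleGraph (Fin n)) [DecidableRel G.Adj]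
    (hconn : G.Connected)
    (hreg : G.IsRegularOfDegree (n - 3)) :
    ((∃ k lam mu : ℕ, G.IsSRGWith n k lam mu) ↔
      (∀ v : Fin n, ((Gᶜ).connectedComponentMk v).supp.ncard = 3)) ∧
    ((∀ v : Fin n, ((Gᶜ).connectedComponentMk v).supp.ncard = 3) →
      IsGreatest {l : ℝ | ∃ X : Fin n → ℝ, X ≠ 0 ∧
        (G.lapMatrix ℝ).mulVec X = l • X} (n : ℝ) ∧
      IsLeast {l : ℝ | ∃ X : Fin n → ℝ, X ≠ 0 ∧ (∑ i, X i) = 0 ∧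
        (G.lapMatrix ℝ).mulVec X = l • X} ((n : ℝ) - 3)) :=
  srg_of_nMinusThree_regular_general n hn G hreg
end
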